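/- Twisted periodicity of Q₀ (from Lemma 4.1 of the paper). Let ν ∈ ℂ with Re ν > 0, and let ψ : (0,∞) → V be continuous and satisfy η(T)ψ(x) = ψ(x+1) + (x+1)^{-2ν-1} η(ST⁻¹) ψ(x/(x+1)) for all x > 0. Then for every x > 0 the series Q₀(x) := x^{-2ν-1} ψ(1/x) - Σ_{n=0}^{∞} (n+x)^{-2ν-1} η(T(T')ⁿ)^{-1} ψ(1 + 1/(n+x)) converges absolutely, and Q₀(x+1) = η(T') Q₀(x) for all x > 0. -/

import Mathlib

open Complex Filter Topology MeasureTheory Set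

noncomputable section

abbrev SL2Z := Matrix.SpecialLinearGroup (Fin 2) ℤ

def Smat : SL2Z := ⟨!![0, 1; -1, 0], by decide⟩
def Tmat : SL2Z := ⟨!![1, 1; 0, 1], by decide⟩
def Tpmat : SL2Z := ⟨!![1, 0; 1, 1], by decide⟩
def negI : SL2Z := ⟨!![-1, 0; 0, -1], by decide⟩

variable {V : Type} [NormedAddCommGroup V] [NormedSpace ℂ V]

/-- The `n`-th term of the series defining `Q₀`:
`(n+x)^{-2ν-1} η(T(T')ⁿ)⁻¹ ψ(1 + 1/(n+x))`. -/
def QZeroTerm (ν : ℂ) (η : SL2Z →* (V →ₗ[ℂ] V)ˣ) (ψ : ℝ → V) (x : ℝ) (n : ℕ) : V :=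
  (((n + x : ℝ) : ℂ) ^ (-2 * ν - 1)) •
    (η (Tmat * Tpmat ^ n)⁻¹ : V →ₗ[ℂ] V) (ψ (1 + 1 / (n + x)))

/-- `Q₀(x) = x^{-2ν-1} ψ(1/x) - Σ_{n≥0} (n+x)^{-2ν-1} η(T(T')ⁿ)⁻¹ ψ(1 + 1/(n+x))`. -/
def QZero [FiniteDimensional ℂ V] (ν : ℂ) (η : SL2Z →* (V →ₗ[ℂ] V)ˣ) (ψ : ℝ → V)
    (x : ℝ) : V :=
  (((x : ℝ) : ℂ) ^ (-2 * ν - 1)) • ψ (1 / x) - ∑' n : ℕ, QZeroTerm ν η ψ x n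

/-! The terms of the series are bounded by `C (n+x)^{-2 Re ν - 1}`, since `η` has finitely many
values and `ψ` is bounded on `[1, 1 + 1/x]`. Shifting `x ↦ x + 1` maps the `n`-th term to
`η(T')` of the `(n+1)`-st, so only the boundary term `n = 0` is left over; the Lewis equation at
`1/x`, together with `T' T⁻¹ · S T⁻¹ = 1`, matches it with the change of the first term. -/

lemma summable_nat_add_rpow {s : ℝ} (hs : s < -1) {x : ℝ} (hx : 0 < x) :
    Summable fun n : ℕ => ((n : ℝ) + x) ^ s := by
  refine ((Real.summable_one_div_nat_add_rpow x (-s)).mpr (by linarith)).congr fun n => ?_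
  rw [abs_of_pos (by positivity), Real.rpow_neg (by positivity), one_div, inv_inv]

lemma summable_norm_cpow_smul_of_norm_le {s : ℂ} (hs : s.re < -1) {x : ℝ} (hx : 0 < x)
    {v : ℕ → V} {M : ℝ} (hv : ∀ n, ‖v n‖ ≤ M) :
    Summable fun n : ℕ => ‖(((n + x : ℝ)) : ℂ) ^ s • v n‖ := by
  refine ((summable_nat_add_rpow hs hx).mul_right M).of_nonneg_of_le (fun _ => norm_nonneg _)
    fun n => ?_
  have hnx : 0 < (n : ℝ) + x := by positivity
  rw [norm_smul, Complex.norm_cpow_eq_rpow_re_of_pos hnx]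
  exact mul_le_mul_of_nonneg_left (hv n) (Real.rpow_nonneg hnx.le _)

lemma LinearMap.exists_pos_bound_of_finite_range [FiniteDimensional ℂ V] {ι : Type*}
    {f : ι → V →ₗ[ℂ] V} (hf : (Set.range f).Finite) :
    ∃ C > 0, ∀ i v, ‖f i v‖ ≤ C * ‖v‖ := by
  obtain ⟨C, hC0, hC⟩ :=
    ((hf.image LinearMap.toContinuousLinearMap).isBounded).exists_pos_norm_le
  refine ⟨C, hC0, fun i v => ?_⟩
  exact (LinearMap.toContinuousLinearMap (f i)).le_of_opNorm_le
    (hC _ (mem_image_of_mem _ (Set.mem_range_self i))) v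

lemma MonoidHom.units_apply_apply {G : Type*} [Group G] (η : G →* (V →ₗ[ℂ] V)ˣ) (g h : G)
    (v : V) :
    (η g : V →ₗ[ℂ] V) ((η h : V →ₗ[ℂ] V) v) = (η (g * h) : V →ₗ[ℂ] V) v := by
  rw [map_mul, Units.val_mul, Module.End.mul_apply]

lemma Tpmat_mul_Tmat_inv_mul_Smat_mul_Tmat_inv : Tpmat * Tmat⁻¹ * (Smat * Tmat⁻¹) = 1 := by
  have hTinv : Tmat⁻¹ = ⟨!![1, -1; 0, 1], by decide⟩ :=
    inv_eq_of_mul_eq_one_right <| by ext i j; fin_cases i <;> fin_cases j <;> rfl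
  rw [hTinv]
  ext i j
  fin_cases i <;> fin_cases j <;> rfl

section QZero

variable {ν : ℂ} {η : SL2Z →* (V →ₗ[ℂ] V)ˣ} {ψ : ℝ → V}

lemma summable_norm_QZeroTerm [FiniteDimensional ℂ V] (hηfin : (range η).Finite)
    (hν : 0 < ν.re) (hψc : ContinuousOn ψ (Ioi 0)) {x : ℝ} (hx : 0 < x) :
    Summable fun n : ℕ => ‖QZeroTerm ν η ψ x n‖ := by
  obtain ⟨C, hC0, hC⟩ := LinearMap.exists_pos_bound_of_finite_range
    (f := fun g => (η g : V →ₗ[ℂ] V)) (Set.range_comp Units.val η ▸ hηfin.image Units.val)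
  obtain ⟨M, hM⟩ := isCompact_Icc.exists_bound_of_continuousOn
    (hψc.mono fun y (hy : y ∈ Icc (1 : ℝ) (1 + 1 / x)) => one_pos.trans_le hy.1)
  have hmem : ∀ n : ℕ, 1 + 1 / ((n : ℝ) + x) ∈ Icc (1 : ℝ) (1 + 1 / x) := fun n =>
    ⟨le_add_of_nonneg_right (by positivity),
      add_le_add_right (one_div_le_one_div_of_le hx (le_add_of_nonneg_left n.cast_nonneg)) 1⟩
  refine summable_norm_cpow_smul_of_norm_le (M := C * M) (by simp; linarith) hx fun n => ?_
  exact (hC _ _).trans (mul_le_mul_of_nonneg_left (hM _ (hmem n)) hC0.le)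

lemma QZeroTerm_add_one (x : ℝ) (n : ℕ) :
    QZeroTerm ν η ψ (x + 1) n = (η Tpmat : V →ₗ[ℂ] V) (QZeroTerm ν η ψ x (n + 1)) := by
  have hg : Tpmat * (Tmat * Tpmat ^ (n + 1))⁻¹ = (Tmat * Tpmat ^ n)⁻¹ := by group
  have hn : (n : ℝ) + (x + 1) = ((n + 1 : ℕ) : ℝ) + x := by push_cast; ring
  rw [QZeroTerm, QZeroTerm, _root_.map_smul, η.units_apply_apply, hg, hn]

lemma tsum_QZeroTerm_add_one [FiniteDimensional ℂ V] {x : ℝ}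
    (hx : Summable (QZeroTerm ν η ψ x)) :
    ∑' n, QZeroTerm ν η ψ (x + 1) n =
      (η Tpmat : V →ₗ[ℂ] V) (∑' n, QZeroTerm ν η ψ x n - QZeroTerm ν η ψ x 0) := by
  rw [hx.tsum_eq_zero_add, add_sub_cancel_left, funext (QZeroTerm_add_one x)]
  exact ((η Tpmat : V →ₗ[ℂ] V).toContinuousLinearMap.map_tsum
    ((summable_nat_add_iff 1).mpr hx)).symm

lemma ofReal_add_one_cpow {x : ℝ} (hx : 0 < x) (s : ℂ) :
    (((x + 1 : ℝ)) : ℂ) ^ s = ((x : ℝ) : ℂ) ^ s * ((1 + 1 / x : ℝ) : ℂ) ^ s := by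
  rw [← Complex.mul_cpow_ofReal_nonneg hx.le (by positivity), ← Complex.ofReal_mul,
    mul_add, mul_one_div_cancel hx.ne', mul_one]

lemma cpow_smul_one_div_add_one
    (hlewis : ∀ x : ℝ, 0 < x →
      (η Tmat : V →ₗ[ℂ] V) (ψ x) =
        ψ (x + 1) + (((x + 1 : ℝ) : ℂ) ^ (-2 * ν - 1)) •
          (η (Smat * Tmat⁻¹) : V →ₗ[ℂ] V) (ψ (x / (x + 1))))
    {x : ℝ} (hx : 0 < x) :
    (((x + 1 : ℝ)) : ℂ) ^ (-2 * ν - 1) • ψ (1 / (x + 1)) =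
      ((x : ℝ) : ℂ) ^ (-2 * ν - 1) • (η Tpmat : V →ₗ[ℂ] V) (ψ (1 / x)) -
        (η Tpmat : V →ₗ[ℂ] V) (QZeroTerm ν η ψ x 0) := by
  have hψ : ψ (1 + 1 / x) = (η Tmat : V →ₗ[ℂ] V) (ψ (1 / x)) -
      (((1 + 1 / x : ℝ)) : ℂ) ^ (-2 * ν - 1) •
        (η (Smat * Tmat⁻¹) : V →ₗ[ℂ] V) (ψ (1 / (x + 1))) := by
    have h := hlewis (1 / x) (by positivity)
    rw [show 1 / x / (1 / x + 1) = 1 / (x + 1) by field_simp; ring, add_comm (1 / x)] at h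
    rw [h, add_sub_cancel_right]
  have hT : Tpmat * Tmat⁻¹ * Tmat = Tpmat := by group
  simp only [QZeroTerm, CharP.cast_eq_zero, zero_add, pow_zero, mul_one, _root_.map_smul]
  rw [η.units_apply_apply, hψ, map_sub, _root_.map_smul, η.units_apply_apply,
    η.units_apply_apply, hT, Tpmat_mul_Tmat_inv_mul_Smat_mul_Tmat_inv, map_one, Units.val_one,
    Module.End.one_apply, smul_sub, smul_smul, ← ofReal_add_one_cpow hx, sub_sub_cancel]

end QZero

theorem QZero_twisted_periodicity_general [FiniteDimensional ℂ V]
    (η : SL2Z →* (V →ₗ[ℂ] V)ˣ) (hηfin : (Set.range η).Finite)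
    (ν : ℂ) (hν : 0 < ν.re)
    (ψ : ℝ → V) (hψc : ContinuousOn ψ (Set.Ioi 0))
    (hlewis : ∀ x : ℝ, 0 < x →
      (η Tmat : V →ₗ[ℂ] V) (ψ x) =
        ψ (x + 1) + (((x + 1 : ℝ) : ℂ) ^ (-2 * ν - 1)) •
          (η (Smat * Tmat⁻¹) : V →ₗ[ℂ] V) (ψ (x / (x + 1)))) :
    (∀ x : ℝ, 0 < x → Summable fun n : ℕ => ‖QZeroTerm ν η ψ x n‖) ∧
    (∀ x : ℝ, 0 < x →
      QZero ν η ψ (x + 1) = (η Tpmat : V →ₗ[ℂ] V) (QZero ν η ψ x)) := by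
  have hsum := fun x (hx : 0 < x) => summable_norm_QZeroTerm hηfin hν hψc hx
  refine ⟨hsum, fun x hx => ?_⟩
  rw [QZero, QZero, tsum_QZeroTerm_add_one (hsum x hx).of_norm,
    cpow_smul_one_div_add_one hlewis hx, map_sub, map_sub, _root_.map_smul]
  abel

/-- **Twisted periodicity of `Q₀`** (from Lemma 4.1 of the paper): for `Re ν > 0` and
`ψ : (0,∞) → V` continuous satisfying the real Lewis equation, the series defining
`Q₀(x)` converges absolutely for every `x > 0` and `Q₀(x+1) = η(T') Q₀(x)`. -/
theorem QZero_twisted_periodicity [FiniteDimensional ℂ V] [Nontrivial V]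
    (η : SL2Z →* (V →ₗ[ℂ] V)ˣ) (hη1 : η negI = 1) (hηfin : (Set.range η).Finite)
    (ν : ℂ) (hν : 0 < ν.re)
    (ψ : ℝ → V) (hψc : ContinuousOn ψ (Set.Ioi 0))
    (hlewis : ∀ x : ℝ, 0 < x →
      (η Tmat : V →ₗ[ℂ] V) (ψ x) =
        ψ (x + 1) + (((x + 1 : ℝ) : ℂ) ^ (-2 * ν - 1)) •
          (η (Smat * Tmat⁻¹) : V →ₗ[ℂ] V) (ψ (x / (x + 1)))) :
    (∀ x : ℝ, 0 < x → Summable fun n : ℕ => ‖QZeroTerm ν η ψ x n‖) ∧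
    (∀ x : ℝ, 0 < x →
      QZero ν η ψ (x + 1) = (η Tpmat : V →ₗ[ℂ] V) (QZero ν η ψ x)) :=
  QZero_twisted_periodicity_general η hηfin ν hν ψ hψc hlewis

end
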